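/- In the lumped drug model with consumption, d/dt c(t) = K·(c_v − c(t)) − g(t, c(t)) where K > 0, c_v > 0, and g is continuous with 0 ≤ g(t, x) whenever x ≥ 0 and g(t, 0) = 0, any solution with c(0) = 0 satisfies 0 ≤ c(t) ≤ c_v·(1 − exp(−K·t)) ≤ c_v for all t ≥ 0. -/

import Mathlib

/-!
Nonnegativity is a barrier argument: wherever `c` touches `0` its derivative is `K * c_v > 0`,
since `g t 0 = 0`, so `c` cannot cross below `0`. Once `c ≥ 0`, the consumption term is
nonnegative, so `c' ≤ K * (c_v - c)`, and Grönwall's inequality bounds `c` by the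
consumption-free solution `c_v * (1 - exp (-K * t))`.
-/

open Set Real

theorem nonneg_of_hasDerivAt_pos_of_eq_zero {f f' : ℝ → ℝ} {a : ℝ} (ha : 0 ≤ f a)
    (hf : ∀ t, a ≤ t → HasDerivAt f (f' t) t)
    (hpos : ∀ t, a ≤ t → f t = 0 → 0 < f' t) :
    ∀ t, a ≤ t → 0 ≤ f t := by
  intro t ht
  have hneg : ∀ x ∈ Icc a t, HasDerivAt (-f) (-f' x) x := fun x hx => (hf x hx.1).neg
  have hfence := image_le_of_deriv_right_lt_deriv_boundary (b := t)
    (B := fun _ => 0) (B' := fun _ => 0)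
    (fun x hx => (hneg x hx).continuousAt.continuousWithinAt)
    (fun x hx => (hneg x (Ico_subset_Icc_self hx)).hasDerivWithinAt)
    (by simpa using ha) (fun _ => hasDerivAt_const _ _)
    (fun x hx hfx => by simpa using hpos x hx.1 (neg_eq_zero.mp hfx)) ⟨ht, le_rfl⟩
  simpa using hfence

theorem le_mul_one_sub_exp_of_hasDerivAt_le {f f' : ℝ → ℝ} {K L : ℝ} (h0 : f 0 ≤ 0)
    (hf : ∀ t, 0 ≤ t → HasDerivAt f (f' t) t)
    (hle : ∀ t, 0 ≤ t → f' t ≤ K * (L - f t)) :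
    ∀ t, 0 ≤ t → f t ≤ L * (1 - exp (-K * t)) := by
  intro t ht
  have hgron := le_gronwallBound_of_liminf_deriv_right_le (K := -K) (ε := K * L) (b := t)
    (fun x hx => (hf x hx.1).continuousAt.continuousWithinAt)
    (fun x hx _ hr => (hf x hx.1).hasDerivWithinAt.liminf_right_slope_le hr) h0
    (fun x hx => by linarith [hle x hx.1]) t ⟨ht, le_rfl⟩
  rw [sub_zero] at hgron
  rcases eq_or_ne K 0 with rfl | hK
  · simpa [gronwallBound_K0] using hgron
  · rw [gronwallBound_of_K_ne_0 (neg_ne_zero.mpr hK)] at hgron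
    convert hgron using 1
    field_simp
    ring

theorem drug_model_comparison_general (K c_v : ℝ) (hK : 0 < K) (hcv : 0 < c_v)
    (g : ℝ → ℝ → ℝ)
    (hg0 : ∀ t : ℝ, g t 0 = 0) (hgpos : ∀ t x : ℝ, 0 ≤ x → 0 ≤ g t x)
    (c : ℝ → ℝ) (hc0 : c 0 = 0)
    (hderiv : ∀ t : ℝ, 0 ≤ t → HasDerivAt c (K * (c_v - c t) - g t (c t)) t) :
    ∀ t : ℝ, 0 ≤ t →
      0 ≤ c t ∧ c t ≤ c_v * (1 - Real.exp (-K * t)) ∧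
      c_v * (1 - Real.exp (-K * t)) ≤ c_v := by
  have hc_nonneg : ∀ t, 0 ≤ t → 0 ≤ c t :=
    nonneg_of_hasDerivAt_pos_of_eq_zero hc0.ge hderiv fun t _ hct => by
      simpa [hct, hg0] using mul_pos hK hcv
  have hc_le : ∀ t, 0 ≤ t → c t ≤ c_v * (1 - exp (-K * t)) :=
    le_mul_one_sub_exp_of_hasDerivAt_le hc0.le hderiv fun t ht =>
      sub_le_self _ (hgpos t _ (hc_nonneg t ht))
  intro t ht
  exact ⟨hc_nonneg t ht, hc_le t ht, mul_le_of_le_one_right hcv.le (by simp [(exp_pos _).le])⟩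

theorem drug_model_comparison (K c_v : ℝ) (hK : 0 < K) (hcv : 0 < c_v)
    (g : ℝ → ℝ → ℝ) (hg : Continuous (fun p : ℝ × ℝ => g p.1 p.2))
    (hg0 : ∀ t : ℝ, g t 0 = 0) (hgpos : ∀ t x : ℝ, 0 ≤ x → 0 ≤ g t x)
    (c : ℝ → ℝ) (hc0 : c 0 = 0)
    (hderiv : ∀ t : ℝ, 0 ≤ t → HasDerivAt c (K * (c_v - c t) - g t (c t)) t) :
    ∀ t : ℝ, 0 ≤ t →
      0 ≤ c t ∧ c t ≤ c_v * (1 - Real.exp (-K * t)) ∧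
      c_v * (1 - Real.exp (-K * t)) ≤ c_v :=
  drug_model_comparison_general K c_v hK hcv g hg0 hgpos c hc0 hderiv
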